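/- Let λ be a partition of m, let T₀ be a standard Young tableau of shape λ with descent composition α, and let γ = (γ_1,…,γ_n) be a weak composition of m (nonnegative integers summing to m). If the composition obtained from γ by deleting its zero parts refines α, then there is exactly one semistandard Young tableau T of shape λ with wt(T) = γ and std(T) = T₀; otherwise there is no such tableau. -/

import Mathlib

open scoped Classical

namespace QC

/-- A filling assigns a natural-number entry to each cell `(i, j)`;
entries are `0` outside the shape. Values are 1-based. -/
abbrev Filling : Type := ℕ → ℕ → ℕ

/-- The cell `(i, j)` (row `i`, column `j`, both 0-based) lies in the Young diagram of `lam`. -/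
def InShape (lam : List ℕ) (i j : ℕ) : Prop :=
  i < lam.length ∧ j < lam.getD i 0

/-- The finite set of cells of the Young diagram of `lam`. -/
def cells (lam : List ℕ) : Finset (ℕ × ℕ) :=
  (Finset.range lam.length).biUnion fun i =>
    ({i} : Finset ℕ) ×ˢ Finset.range (lam.getD i 0)

/-- `lam` is a partition of `m`: weakly decreasing, positive parts, summing to `m`. -/
def IsPartitionOf (m : ℕ) (lam : List ℕ) : Prop :=
  lam.Pairwise (· ≥ ·) ∧ (∀ x ∈ lam, 0 < x) ∧ lam.sum = m

/-- `a` is a composition of `m`: positive parts summing to `m`. -/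
def IsCompositionOf (m : ℕ) (a : List ℕ) : Prop :=
  (∀ x ∈ a, 0 < x) ∧ a.sum = m

/-- `T` is a semistandard Young tableau of shape `lam`: positive entries on the shape,
zero off the shape, rows weakly increasing, columns strictly increasing. -/
def IsSSYT (lam : List ℕ) (T : Filling) : Prop :=
  (∀ i j, ¬ InShape lam i j → T i j = 0) ∧
  (∀ i j, InShape lam i j → 0 < T i j) ∧
  (∀ i j1 j2, j1 ≤ j2 → InShape lam i j2 → T i j1 ≤ T i j2) ∧
  (∀ i1 i2 j, i1 < i2 → InShape lam i2 j → T i1 j < T i2 j)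

/-- All entries of `T` are at most `n`. -/
def EntriesLE (n : ℕ) (T : Filling) : Prop := ∀ i j, T i j ≤ n

/-- `T` is a standard Young tableau of shape `lam ⊢ m`: a semistandard tableau in which
each of `1, …, m` appears exactly once. -/
def IsSYT (lam : List ℕ) (m : ℕ) (T : Filling) : Prop :=
  IsSSYT lam T ∧ EntriesLE m T ∧
    ∀ k, 1 ≤ k → k ≤ m → ∃! c : ℕ × ℕ, InShape lam c.1 c.2 ∧ T c.1 c.2 = k

/-- `k` is a descent of the standard tableau `T`: `k + 1` lies in a strictly lower row. -/
def IsDescent (lam : List ℕ) (T : Filling) (k : ℕ) : Prop :=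
  ∃ i1 j1 i2 j2, InShape lam i1 j1 ∧ InShape lam i2 j2 ∧
    T i1 j1 = k ∧ T i2 j2 = k + 1 ∧ i1 < i2

/-- The sorted list of descents of `T`, a standard tableau with `m` cells. -/
noncomputable def descentList (lam : List ℕ) (m : ℕ) (T : Filling) : List ℕ :=
  ((Finset.Ico 1 m).filter fun k => IsDescent lam T k).sort (· ≤ ·)

/-- The number of descents of `T`. -/
noncomputable def numDescents (lam : List ℕ) (m : ℕ) (T : Filling) : ℕ :=
  ((Finset.Ico 1 m).filter fun k => IsDescent lam T k).card

/-- The descent composition `(d₁, d₂ - d₁, …, m - d_{s-1})` of a standard tableau. -/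
noncomputable def desComp (lam : List ℕ) (m : ℕ) (T : Filling) : List ℕ :=
  if m = 0 then [] else
    List.zipWith (· - ·) (descentList lam m T ++ [m]) (0 :: descentList lam m T)

/-- The number of cells of `T` carrying the entry `v`. -/
def countEq (lam : List ℕ) (T : Filling) (v : ℕ) : ℕ :=
  ((cells lam).filter fun c => T c.1 c.2 = v).card

/-- The weight of `T` as a list `(γ₁, …, γₙ)`, `γᵢ` the number of entries equal to `i`. -/
def wt (lam : List ℕ) (n : ℕ) (T : Filling) : List ℕ :=
  (List.range n).map fun v => countEq lam T (v + 1)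

/-- The standardization of `T`: cells are relabelled `1, …, m` in order of increasing entry,
breaking ties between equal entries by increasing column index. -/
noncomputable def stdize (lam : List ℕ) (T : Filling) : Filling := fun i j =>
  if InShape lam i j then
    ((cells lam).filter fun c =>
      T c.1 c.2 < T i j ∨ (T c.1 c.2 = T i j ∧ c.2 ≤ j)).card
  else 0

/-- Given a weak composition `g`, `destValue g k` is the unique `i` with
`g₁ + ⋯ + g_{i-1} < k ≤ g₁ + ⋯ + g_i` (and `0` for `k = 0`). -/
def destValue (g : List ℕ) (k : ℕ) : ℕ :=
  ((List.range g.length).filter fun i => (g.take i).sum < k).length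

/-- The destandardization `D_g(T₀)`: each entry `j` of `T₀` is replaced by the unique `i`
with `g₁ + ⋯ + g_{i-1} < j ≤ g₁ + ⋯ + g_i`. -/
def Dmap (g : List ℕ) (T : Filling) : Filling := fun i j => destValue g (T i j)

/-- `Refines a b`: the composition `b` refines `a`, i.e. `b` can be cut into consecutive
blocks whose sums are the parts of `a` in order. -/
def Refines (a b : List ℕ) : Prop :=
  ∃ L : List (List ℕ), L.flatten = b ∧ L.map List.sum = a

/-- Strict lexicographic order on integer sequences. -/
def lexLt (a b : List ℕ) : Prop := List.Lex (· < ·) a b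

/-- Weak lexicographic order on integer sequences. -/
def lexLe (a b : List ℕ) : Prop := a = b ∨ lexLt a b

/-- The largest entry of `T`. -/
def maxEntry (lam : List ℕ) (T : Filling) : ℕ :=
  (cells lam).sup fun c => T c.1 c.2

/-- The weight of `T` (over all values), with zero parts deleted. -/
def wtFull (lam : List ℕ) (T : Filling) : List ℕ :=
  ((List.range (maxEntry lam T)).map fun v => countEq lam T (v + 1)).filter (· ≠ 0)

/-- The proper partial sums `α₁, α₁ + α₂, …, α₁ + ⋯ + α_{s-1}` of a composition. -/
def innerSums (a : List ℕ) : List ℕ :=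
  (List.range a.length).tail.map fun t => (a.take t).sum

/-- `f : Fin m → Fin n` encodes a sequence `1 ≤ i₁ ≤ i₂ ≤ … ≤ i_m ≤ n` (via `i_t = f (t-1) + 1`)
which ascends strictly, `i_j < i_{j+1}`, at every proper partial sum `j` of `a`. -/
def IsFWord (m n : ℕ) (a : List ℕ) (f : Fin m → Fin n) : Prop :=
  Monotone f ∧
    ∀ (t : ℕ) (ht : t + 1 < m), (t + 1) ∈ innerSums a →
      f ⟨t, Nat.lt_of_succ_lt ht⟩ < f ⟨t + 1, ht⟩

/-- The fundamental quasisymmetric polynomial `F_a(x₁, …, xₙ)` of degree `m`. -/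
noncomputable def Fpoly (m n : ℕ) (a : List ℕ) : MvPolynomial (Fin n) ℤ :=
  ∑ f ∈ Finset.univ.filter (fun f : Fin m → Fin n => IsFWord m n a f),
    ∏ t : Fin m, MvPolynomial.X (f t)

/-- The monomial `x₁^{γ₁} ⋯ xₙ^{γₙ}` of a tableau `T` of weight `γ`. -/
noncomputable def wtMonomial (lam : List ℕ) (n : ℕ) (T : Filling) :
    MvPolynomial (Fin n) ℤ :=
  ∏ i : Fin n, MvPolynomial.X i ^ countEq lam T (i.val + 1)

/-- `Rot` of a word `w` of length `k` on `{1, …, n}`: the `j`-th letter of `rot k n w`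
is `n + 1 - w_{k+1-j}` (1-based), here written 0-based. -/
def rot (k n : ℕ) (w : Fin k → ℕ) : Fin k → ℕ := fun j =>
  n + 1 - w ⟨k - 1 - j.val, by have := j.isLt; omega⟩

/-- The descent set of a word `w = w₁ ⋯ w_k`: positions `i ∈ {1, …, k-1}` with `wᵢ > w_{i+1}`
(1-based positions; `w ⟨i-1,_⟩` is `wᵢ`). -/
noncomputable def wordDes (k : ℕ) (w : Fin k → ℕ) : Finset ℕ :=
  (Finset.Ico 1 k).filter fun i =>
    ∃ (h1 : i - 1 < k) (h2 : i < k), w ⟨i, h2⟩ < w ⟨i - 1, h1⟩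

/-- The descent composition of a word of length `k`. -/
noncomputable def wordDesComp (k : ℕ) (w : Fin k → ℕ) : List ℕ :=
  if k = 0 then []
  else
    List.zipWith (· - ·) ((wordDes k w).sort (· ≤ ·) ++ [k])
      (0 :: (wordDes k w).sort (· ≤ ·))

/-!
Standardizing a semistandard tableau `T` of weight `γ` and then destandardizing with `γ`
returns `T`: standardization sends the cells with entry `i` onto the block of labels
`(γ₁ + ⋯ + γ_{i-1}, γ₁ + ⋯ + γ_i]`, and `destValue γ` is the Galois adjoint of the prefix sums
of `γ`. So `D_γ(T₀)` is the only candidate. It is semistandard with standardization `T₀`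
exactly when every descent of `T₀` is a prefix sum of `γ`: along a run of labels without
descents a standard tableau moves weakly up and strictly right, so equal entries of `D_γ(T₀)`
never share a column and are standardized left to right, while where `k + 1` lies below `k`
the entries must jump. Finally, the prefix sums of `DesComp(T₀)` are `0`, `m` and the descents,
deleting zero parts of `γ` does not change its prefix sums, and one composition refines another
iff its prefix sums are among those of the other.
-/

def prefixSum (g : List ℕ) (t : ℕ) : ℕ := (g.take t).sum

lemma prefixSum_zero (g : List ℕ) : prefixSum g 0 = 0 := by
  simp [prefixSum]

lemma prefixSum_cons_succ (x : ℕ) (g : List ℕ) (t : ℕ) :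
    prefixSum (x :: g) (t + 1) = x + prefixSum g t := by
  simp [prefixSum]

lemma prefixSum_mono (g : List ℕ) : Monotone (prefixSum g) :=
  List.monotone_sum_take g

lemma prefixSum_of_length_le {g : List ℕ} {t : ℕ} (h : g.length ≤ t) :
    prefixSum g t = g.sum := by
  rw [prefixSum, List.take_of_length_le h]

lemma prefixSum_le_sum (g : List ℕ) (t : ℕ) : prefixSum g t ≤ g.sum :=
  (prefixSum_mono g (Nat.le_max_left t g.length)).trans_eq
    (prefixSum_of_length_le (Nat.le_max_right _ _))

lemma zero_mem_range_prefixSum (g : List ℕ) : 0 ∈ Set.range (prefixSum g) :=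
  ⟨0, prefixSum_zero g⟩

lemma sum_mem_range_prefixSum (g : List ℕ) : g.sum ∈ Set.range (prefixSum g) :=
  ⟨g.length, prefixSum_of_length_le le_rfl⟩

lemma range_prefixSum_cons (x : ℕ) (g : List ℕ) :
    Set.range (prefixSum (x :: g)) = insert 0 ((x + ·) '' Set.range (prefixSum g)) := by
  ext y
  constructor
  · rintro ⟨_ | t, rfl⟩
    · exact Or.inl (prefixSum_zero _)
    · exact Or.inr ⟨_, ⟨t, rfl⟩, (prefixSum_cons_succ x g t).symm⟩
  · rintro (rfl | ⟨_, ⟨t, rfl⟩, rfl⟩)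
    · exact ⟨0, prefixSum_zero _⟩
    · exact ⟨t + 1, prefixSum_cons_succ x g t⟩

lemma destValue_eq_card (g : List ℕ) (k : ℕ) :
    destValue g k = ((Finset.range g.length).filter fun i => prefixSum g i < k).card :=
  rfl

lemma destValue_le_iff {g : List ℕ} {k : ℕ} (hk : k ≤ g.sum) (v : ℕ) :
    destValue g k ≤ v ↔ k ≤ prefixSum g v := by
  rw [destValue_eq_card]
  constructor
  · intro h
    by_contra! hv
    have hvlen : v < g.length := by
      by_contra! hlen
      rw [prefixSum_of_length_le hlen] at hv
      omega
    have hsub : Finset.range (v + 1) ⊆ (Finset.range g.length).filter fun i => prefixSum g i < k :=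
      fun i hi => Finset.mem_filter.mpr ⟨Finset.mem_range.mpr
        ((Finset.mem_range.mp hi).trans_le hvlen),
        (prefixSum_mono g (Finset.mem_range_succ_iff.mp hi)).trans_lt hv⟩
    have := Finset.card_le_card hsub
    rw [Finset.card_range] at this
    omega
  · intro h
    calc _ ≤ (Finset.range v).card := Finset.card_le_card fun i hi => by
            simp only [Finset.mem_filter, Finset.mem_range] at hi ⊢
            by_contra! hvi
            exact absurd (prefixSum_mono g hvi) (by omega)
      _ = v := Finset.card_range v

lemma destValue_zero (g : List ℕ) : destValue g 0 = 0 :=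
  Nat.le_zero.mp ((destValue_le_iff (Nat.zero_le _) 0).mpr (Nat.zero_le _))

lemma destValue_pos {g : List ℕ} {k : ℕ} (hk0 : 0 < k) (hk : k ≤ g.sum) : 0 < destValue g k := by
  by_contra! h
  have := (destValue_le_iff hk 0).mp h
  rw [prefixSum_zero] at this
  omega

lemma destValue_mono {g : List ℕ} {a b : ℕ} (hab : a ≤ b) (hb : b ≤ g.sum) :
    destValue g a ≤ destValue g b :=
  (destValue_le_iff (hab.trans hb) _).mpr
    (hab.trans ((destValue_le_iff hb _).mp le_rfl))

lemma destValue_lt_destValue_iff {g : List ℕ} {a b : ℕ} (hab : a ≤ b) (hb : b ≤ g.sum) :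
    destValue g a < destValue g b ↔ ∃ v, a ≤ prefixSum g v ∧ prefixSum g v < b := by
  constructor
  · intro h
    refine ⟨destValue g a, (destValue_le_iff (hab.trans hb) _).mp le_rfl, ?_⟩
    by_contra! hb'
    exact absurd ((destValue_le_iff hb _).mpr hb') (by omega)
  · rintro ⟨v, hav, hvb⟩
    have h1 := (destValue_le_iff (hab.trans hb) v).mpr hav
    have h2 : ¬ destValue g b ≤ v := by rw [destValue_le_iff hb]; omega
    omega

lemma mem_range_prefixSum_of_destValue_lt {g : List ℕ} {k : ℕ} (hk : k + 1 ≤ g.sum)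
    (h : destValue g k < destValue g (k + 1)) : k ∈ Set.range (prefixSum g) := by
  obtain ⟨v, h1, h2⟩ := (destValue_lt_destValue_iff (Nat.le_succ k) hk).mp h
  exact ⟨v, by omega⟩

lemma card_filter_destValue_eq {g : List ℕ} {v : ℕ} (hv : v < g.length) :
    ((Finset.Icc 1 g.sum).filter fun k => destValue g k = v + 1).card = g[v] := by
  have hblock : ((Finset.Icc 1 g.sum).filter fun k => destValue g k = v + 1)
      = Finset.Ioc (prefixSum g v) (prefixSum g (v + 1)) := by
    ext k
    simp only [Finset.mem_filter, Finset.mem_Icc, Finset.mem_Ioc]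
    have := prefixSum_le_sum g (v + 1)
    constructor
    · rintro ⟨⟨_, hk⟩, hkv⟩
      have h1 := (destValue_le_iff hk (v + 1)).mp hkv.le
      have h2 : ¬ destValue g k ≤ v := by omega
      rw [destValue_le_iff hk] at h2
      omega
    · rintro ⟨h1, h2⟩
      have hk : k ≤ g.sum := by omega
      have h3 := (destValue_le_iff hk (v + 1)).mpr h2
      have h4 : ¬ destValue g k ≤ v := by rw [destValue_le_iff hk]; omega
      exact ⟨⟨by omega, hk⟩, by omega⟩
  rw [hblock, Nat.card_Ioc, prefixSum, prefixSum, List.sum_take_succ _ _ hv]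
  omega

lemma Refines.range_prefixSum_subset {a b : List ℕ} (h : Refines a b) :
    Set.range (prefixSum a) ⊆ Set.range (prefixSum b) := by
  obtain ⟨L, rfl, rfl⟩ := h
  rintro _ ⟨t, rfl⟩
  have hprefix : L.flatten.take (L.take t).flatten.length = (L.take t).flatten := by
    have := List.take_left (l₁ := (L.take t).flatten) (l₂ := (L.drop t).flatten)
    rwa [← List.flatten_append, List.take_append_drop] at this
  exact ⟨(L.take t).flatten.length, by
    rw [prefixSum, prefixSum, hprefix, List.sum_flatten, List.map_take]⟩

lemma IsCompositionOf.eq_nil {a : List ℕ} (ha : IsCompositionOf 0 a) : a = [] := by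
  rcases a with _ | ⟨x, a⟩
  · rfl
  · have hx := ha.1 x (by simp)
    have hsum := ha.2
    rw [List.sum_cons] at hsum
    omega

lemma IsCompositionOf.tail {m x : ℕ} {a : List ℕ} (ha : IsCompositionOf m (x :: a)) :
    IsCompositionOf (m - x) a :=
  ⟨fun z hz => ha.1 z (List.mem_cons_of_mem x hz), by rw [← ha.2, List.sum_cons]; omega⟩

lemma IsCompositionOf.cons {m x : ℕ} {a : List ℕ} (hx : 0 < x) (ha : IsCompositionOf m a) :
    IsCompositionOf (x + m) (x :: a) :=
  ⟨by simpa [hx] using ha.1, by rw [List.sum_cons, ha.2]⟩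

lemma exists_add_eq_of_range_prefixSum_cons_subset {x y r : ℕ} {a b : List ℕ} (hx : 0 < x)
    (h : Set.range (prefixSum (x :: a)) ⊆ Set.range (prefixSum (y :: b)))
    (hr : r ∈ Set.range (prefixSum a)) : ∃ s ∈ Set.range (prefixSum b), y + s = x + r := by
  rw [range_prefixSum_cons, range_prefixSum_cons] at h
  rcases h (Or.inr ⟨r, hr, rfl⟩) with h0 | hs
  · simp only at h0
    omega
  · exact hs

lemma refines_of_range_prefixSum_subset {m : ℕ} {a b : List ℕ} (ha : IsCompositionOf m a)
    (hb : IsCompositionOf m b) (h : Set.range (prefixSum a) ⊆ Set.range (prefixSum b)) :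
    Refines a b := by
  induction b generalizing a m with
  | nil =>
    obtain rfl : m = 0 := hb.2.symm
    obtain rfl := ha.eq_nil
    exact ⟨[], rfl, rfl⟩
  | cons y b ih =>
    obtain ⟨x, a, rfl⟩ : ∃ x a', a = x :: a' := by
      rcases a with _ | ⟨x, a⟩
      · obtain rfl : m = 0 := ha.2.symm
        exact absurd hb.eq_nil (List.cons_ne_nil y b)
      · exact ⟨x, a, rfl⟩
    have hx : 0 < x := ha.1 x (by simp)
    have hxm : x ≤ m := by rw [← ha.2, List.sum_cons]; omega
    have hshift := fun r => exists_add_eq_of_range_prefixSum_cons_subset (r := r) hx h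
    obtain ⟨s₀, -, hs₀⟩ := hshift 0 (zero_mem_range_prefixSum a)
    rcases (show y ≤ x by omega).eq_or_lt with rfl | hyx
    · obtain ⟨L, hL, hLs⟩ := ih ha.tail hb.tail fun r hr => by
        obtain ⟨s, hs, hsr⟩ := hshift r hr
        rwa [show s = r by omega] at hs
      exact ⟨[y] :: L, by simp [hL], by simp [hLs]⟩
    · have ha' : IsCompositionOf (m - y) ((x - y) :: a) := by
        have := ha.tail.cons (show 0 < x - y by omega)
        rwa [show x - y + (m - x) = m - y by omega] at this
      obtain ⟨L, hL, hLs⟩ := ih ha' hb.tail <| by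
        rw [range_prefixSum_cons, Set.insert_subset_iff]
        refine ⟨zero_mem_range_prefixSum b, ?_⟩
        rintro _ ⟨r, hr, rfl⟩
        obtain ⟨s, hs, hsr⟩ := hshift r hr
        rwa [show s = x - y + r by omega] at hs
      obtain ⟨l, L, rfl⟩ : ∃ l L', L = l :: L' := by
        rcases L with _ | ⟨l, L⟩
        · simp at hLs
        · exact ⟨l, L, rfl⟩
      simp only [List.map_cons, List.cons.injEq] at hLs
      exact ⟨(y :: l) :: L, by simp [← hL], by
        rw [List.map_cons, List.sum_cons, hLs.1, hLs.2, Nat.add_sub_cancel' hyx.le]⟩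

lemma refines_iff_range_prefixSum_subset {m : ℕ} {a b : List ℕ} (ha : IsCompositionOf m a)
    (hb : IsCompositionOf m b) :
    Refines a b ↔ Set.range (prefixSum a) ⊆ Set.range (prefixSum b) :=
  ⟨Refines.range_prefixSum_subset, refines_of_range_prefixSum_subset ha hb⟩

lemma range_prefixSum_filter_ne_zero (g : List ℕ) :
    Set.range (prefixSum (g.filter (· ≠ 0))) = Set.range (prefixSum g) := by
  induction g with
  | nil => rfl
  | cons x g ih =>
    by_cases hx : x = 0
    · subst hx
      rw [List.filter_cons_of_neg (by simp), ih, range_prefixSum_cons]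
      simp only [zero_add, Set.image_id']
      exact (Set.insert_eq_of_mem (zero_mem_range_prefixSum g)).symm
    · rw [List.filter_cons_of_pos (by simpa using hx), range_prefixSum_cons,
        range_prefixSum_cons, ih]

lemma isCompositionOf_filter_ne_zero {m : ℕ} {g : List ℕ} (h : g.sum = m) :
    IsCompositionOf m (g.filter (· ≠ 0)) := by
  refine ⟨fun x hx => Nat.pos_of_ne_zero (by simpa using (List.mem_filter.mp hx).2), ?_⟩
  subst h
  induction g with
  | nil => rfl
  | cons x g ih =>
    rw [List.filter_cons]
    split_ifs <;> simp_all

def gaps (b : ℕ) (l : List ℕ) (c : ℕ) : List ℕ := List.zipWith (· - ·) (l ++ [c]) (b :: l)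

lemma gaps_nil (b c : ℕ) : gaps b [] c = [c - b] := rfl

lemma gaps_cons (b y c : ℕ) (l : List ℕ) : gaps b (y :: l) c = (y - b) :: gaps y l c := rfl

lemma pos_of_mem_gaps {b c : ℕ} {l : List ℕ} (h : (b :: (l ++ [c])).Pairwise (· < ·)) :
    ∀ x ∈ gaps b l c, 0 < x := by
  induction l generalizing b with
  | nil => simp_all [gaps_nil]
  | cons y l ih =>
    rw [List.cons_append, List.pairwise_cons] at h
    intro x hx
    rw [gaps_cons, List.mem_cons] at hx
    rcases hx with rfl | hx
    · have : b < y := h.1 y (by simp)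
      omega
    · exact ih h.2 x hx

lemma sum_gaps {b c : ℕ} {l : List ℕ} (h : (b :: (l ++ [c])).Pairwise (· ≤ ·)) :
    (gaps b l c).sum = c - b := by
  induction l generalizing b with
  | nil => simp [gaps_nil]
  | cons y l ih =>
    rw [List.cons_append, List.pairwise_cons] at h
    have hby : b ≤ y := h.1 y (by simp)
    have hyc : y ≤ c := (List.pairwise_cons.mp h.2).1 c (by simp)
    rw [gaps_cons, List.sum_cons, ih h.2]
    omega

lemma range_prefixSum_gaps {b c : ℕ} {l : List ℕ} (h : (b :: (l ++ [c])).Pairwise (· ≤ ·)) :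
    Set.range (prefixSum (gaps b l c)) = (· - b) '' {x | x ∈ b :: (l ++ [c])} := by
  induction l generalizing b with
  | nil =>
    have : Set.range (prefixSum []) = {0} := by ext; simp [prefixSum, eq_comm]
    rw [gaps_nil, range_prefixSum_cons, this]
    ext; simp [eq_comm]
  | cons y l ih =>
    rw [List.cons_append, List.pairwise_cons] at h
    rw [gaps_cons, range_prefixSum_cons, ih h.2, Set.image_image]
    have hshift : Set.EqOn (fun x => y - b + (x - y)) (· - b) {x | x ∈ y :: (l ++ [c])} := by
      intro x hx
      have hby : b ≤ y := h.1 y (by simp)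
      have hyx : y ≤ x := by
        rcases List.mem_cons.mp hx with rfl | hx
        · exact le_rfl
        · exact (List.pairwise_cons.mp h.2).1 x hx
      show y - b + (x - y) = x - b
      omega
    rw [Set.image_congr hshift, List.cons_append]
    ext x
    simp [eq_comm]

lemma mem_cells {lam : List ℕ} {c : ℕ × ℕ} : c ∈ cells lam ↔ InShape lam c.1 c.2 := by
  obtain ⟨i, j⟩ := c
  simp [cells, InShape]

namespace IsSSYT

variable {lam : List ℕ} {T : Filling} {i₁ j₁ i₂ j₂ : ℕ}

lemma lt_of_lt_of_le (hT : IsSSYT lam T) (hin : InShape lam i₂ j₂) (hi : i₁ < i₂)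
    (hj : j₁ ≤ j₂) : T i₁ j₁ < T i₂ j₂ :=
  (hT.2.2.2 i₁ i₂ j₁ hi ⟨hin.1, hj.trans_lt hin.2⟩).trans_le (hT.2.2.1 i₂ j₁ j₂ hj hin)

lemma le_of_le_of_le (hT : IsSSYT lam T) (hin : InShape lam i₂ j₂) (hi : i₁ ≤ i₂)
    (hj : j₁ ≤ j₂) : T i₁ j₁ ≤ T i₂ j₂ := by
  rcases hi.lt_or_eq with hi | rfl
  · exact (hT.lt_of_lt_of_le hin hi hj).le
  · exact hT.2.2.1 i₁ j₁ j₂ hj hin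

lemma northeast_of_not_isDescent (hT : IsSSYT lam T) {k : ℕ} (hk : ¬ IsDescent lam T k)
    (hin₁ : InShape lam i₁ j₁) (hin₂ : InShape lam i₂ j₂) (hv₁ : T i₁ j₁ = k)
    (hv₂ : T i₂ j₂ = k + 1) : i₂ ≤ i₁ ∧ j₁ < j₂ := by
  have hi : i₂ ≤ i₁ := by
    by_contra! hi
    exact hk ⟨i₁, j₁, i₂, j₂, hin₁, hin₂, hv₁, hv₂, hi⟩
  refine ⟨hi, ?_⟩
  by_contra! hj
  have := hT.le_of_le_of_le hin₁ hi hj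
  omega

end IsSSYT

namespace IsSYT

variable {lam : List ℕ} {m : ℕ} {T : Filling}

lemma injOn (hT : IsSYT lam m T) : Set.InjOn (fun c : ℕ × ℕ => T c.1 c.2) (cells lam) := by
  intro c hc c' hc' h
  rw [Finset.mem_coe, mem_cells] at hc hc'
  obtain ⟨u, -, hu⟩ := hT.2.2 (T c.1 c.2) (hT.1.2.1 _ _ hc) (hT.2.1 _ _)
  exact (hu c ⟨hc, rfl⟩).trans (hu c' ⟨hc', h.symm⟩).symm

lemma image_cells (hT : IsSYT lam m T) :
    (cells lam).image (fun c => T c.1 c.2) = Finset.Icc 1 m := by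
  ext k
  simp only [Finset.mem_image, mem_cells, Finset.mem_Icc]
  constructor
  · rintro ⟨c, hc, rfl⟩
    exact ⟨hT.1.2.1 _ _ hc, hT.2.1 _ _⟩
  · rintro ⟨hk₁, hk₂⟩
    obtain ⟨c, hc, -⟩ := hT.2.2 k hk₁ hk₂
    exact ⟨c, hc⟩

lemma card_filter (hT : IsSYT lam m T) (p : ℕ → Prop) [DecidablePred p] :
    ((cells lam).filter fun c => p (T c.1 c.2)).card = ((Finset.Icc 1 m).filter p).card := by
  rw [← hT.image_cells, Finset.filter_image,
    Finset.card_image_of_injOn (hT.injOn.mono (Finset.filter_subset _ _))]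

lemma card_cells (hT : IsSYT lam m T) : (cells lam).card = m := by
  simpa using hT.card_filter fun _ => True

lemma mem_Ico_of_isDescent (hT : IsSYT lam m T) {k : ℕ} (hk : IsDescent lam T k) :
    k ∈ Finset.Ico 1 m := by
  obtain ⟨i₁, j₁, i₂, j₂, hin₁, -, rfl, hv₂, -⟩ := hk
  have h₁ := hT.1.2.1 i₁ j₁ hin₁
  have h₂ := hT.2.1 i₂ j₂
  rw [Finset.mem_Ico]
  omega

lemma northeast_of_forall_not_isDescent (hT : IsSYT lam m T) {a b : ℕ} (hab : a < b)
    (hbm : b ≤ m) (hnd : ∀ k, a ≤ k → k < b → ¬ IsDescent lam T k) {i₁ j₁ i₂ j₂ : ℕ}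
    (hin₁ : InShape lam i₁ j₁) (hin₂ : InShape lam i₂ j₂) (hv₁ : T i₁ j₁ = a)
    (hv₂ : T i₂ j₂ = b) : i₂ ≤ i₁ ∧ j₁ < j₂ := by
  induction b, hab using Nat.le_induction generalizing i₂ j₂ with
  | base => exact hT.1.northeast_of_not_isDescent (hnd a le_rfl (by omega)) hin₁ hin₂ hv₁ hv₂
  | succ b hab ih =>
    obtain ⟨c, ⟨hin, hv⟩, -⟩ := hT.2.2 b (by omega) (by omega)
    have h₁ := ih (by omega) (fun k hk hkb => hnd k hk (by omega)) hin hv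
    have h₂ := hT.1.northeast_of_not_isDescent (hnd b (by omega) (by omega)) hin hin₂ hv hv₂
    omega

end IsSYT

section DescentComposition

variable {lam : List ℕ} {m : ℕ} {T : Filling}

lemma mem_descentList {k : ℕ} :
    k ∈ descentList lam m T ↔ k ∈ Finset.Ico 1 m ∧ IsDescent lam T k := by
  simp [descentList]

lemma pairwise_descentList (hm : 0 < m) :
    (0 :: (descentList lam m T ++ [m])).Pairwise (· < ·) := by
  have hD : ∀ k ∈ descentList lam m T, 0 < k ∧ k < m := fun k hk => by
    have := (mem_descentList.mp hk).1
    rw [Finset.mem_Ico] at this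
    omega
  rw [List.pairwise_cons, List.pairwise_append]
  refine ⟨fun x hx => ?_, ⟨(Finset.sortedLT_sort _).pairwise, List.pairwise_singleton _ _,
    fun x hx y hy => ?_⟩⟩
  · rcases List.mem_append.mp hx with hx | hx
    · exact (hD x hx).1
    · rw [List.mem_singleton.mp hx]
      exact hm
  · rw [List.mem_singleton.mp hy]
    exact (hD x hx).2

lemma desComp_eq_gaps (hm : m ≠ 0) : desComp lam m T = gaps 0 (descentList lam m T) m :=
  if_neg hm

lemma isCompositionOf_desComp : IsCompositionOf m (desComp lam m T) := by
  rcases Nat.eq_zero_or_pos m with rfl | hm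
  · simp [desComp, IsCompositionOf]
  · rw [desComp_eq_gaps hm.ne']
    exact ⟨pos_of_mem_gaps (pairwise_descentList hm),
      (sum_gaps ((pairwise_descentList hm).imp le_of_lt)).trans (Nat.sub_zero m)⟩

lemma range_prefixSum_desComp (hT : IsSYT lam m T) :
    Set.range (prefixSum (desComp lam m T)) = insert 0 (insert m {k | IsDescent lam T k}) := by
  rcases Nat.eq_zero_or_pos m with rfl | hm
  · have hnd : ∀ k, ¬ IsDescent lam T k := fun k hk => by
      simpa using hT.mem_Ico_of_isDescent hk
    ext x
    simp [desComp, prefixSum, hnd, eq_comm]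
  · have hdes : ∀ k, IsDescent lam T k ↔ k ∈ descentList lam m T := fun k =>
      ⟨fun hk => mem_descentList.mpr ⟨hT.mem_Ico_of_isDescent hk, hk⟩,
        fun hk => (mem_descentList.mp hk).2⟩
    rw [desComp_eq_gaps hm.ne', range_prefixSum_gaps ((pairwise_descentList hm).imp le_of_lt)]
    ext x
    simp only [Nat.sub_zero, Set.image_id', Set.mem_ofPred_eq, Set.mem_insert_iff, hdes,
      List.mem_cons, List.mem_append]
    tauto

theorem refines_desComp_filter_ne_zero_iff (hT : IsSYT lam m T) {g : List ℕ} (hg : g.sum = m) :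
    Refines (desComp lam m T) (g.filter (· ≠ 0)) ↔
      ∀ k, IsDescent lam T k → k ∈ Set.range (prefixSum g) := by
  rw [refines_iff_range_prefixSum_subset isCompositionOf_desComp
      (isCompositionOf_filter_ne_zero hg), range_prefixSum_desComp hT,
    range_prefixSum_filter_ne_zero, Set.insert_subset_iff, Set.insert_subset_iff]
  exact ⟨fun h => h.2.2, fun h => ⟨zero_mem_range_prefixSum g, hg ▸ sum_mem_range_prefixSum g, h⟩⟩

end DescentComposition

section Standardization

variable {lam : List ℕ} {n : ℕ} {T : Filling}

lemma length_wt : (wt lam n T).length = n := by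
  simp [wt]

lemma getElem_wt {v : ℕ} (hv : v < (wt lam n T).length) :
    (wt lam n T)[v] = countEq lam T (v + 1) := by
  simp [wt]

lemma sum_wt :
    (wt lam n T).sum = ((cells lam).filter fun c => T c.1 c.2 ∈ Finset.Icc 1 n).card := by
  induction n with
  | zero => simp [wt]
  | succ n ih =>
    have hsplit : ((cells lam).filter fun c => T c.1 c.2 ∈ Finset.Icc 1 (n + 1)) =
        ((cells lam).filter fun c => T c.1 c.2 ∈ Finset.Icc 1 n) ∪
          (cells lam).filter fun c => T c.1 c.2 = n + 1 := by
      rw [← Finset.filter_or]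
      refine Finset.filter_congr fun c _ => ?_
      simp only [Finset.mem_Icc]
      omega
    rw [hsplit, Finset.card_union_of_disjoint (Finset.disjoint_filter.mpr fun c _ h h' => by
      simp only [Finset.mem_Icc] at h h'; omega), ← ih]
    simp [wt, List.range_succ, countEq]

lemma prefixSum_wt {v : ℕ} (hv : v ≤ n) : prefixSum (wt lam n T) v = (wt lam v T).sum := by
  rw [prefixSum, wt, ← List.map_take, List.take_range, min_eq_left hv, wt]

lemma card_filter_le_eq_prefixSum_wt (hT : IsSSYT lam T) {v : ℕ} (hv : v ≤ n) :
    ((cells lam).filter fun c => T c.1 c.2 ≤ v).card = prefixSum (wt lam n T) v := by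
  rw [prefixSum_wt hv, sum_wt]
  congr 1
  refine Finset.filter_congr fun c hc => ?_
  have := hT.2.1 _ _ (mem_cells.mp hc)
  rw [Finset.mem_Icc]
  omega

lemma le_of_sum_wt_eq_card (h : (wt lam n T).sum = (cells lam).card) {i j : ℕ}
    (hin : InShape lam i j) : T i j ≤ n := by
  rw [sum_wt] at h
  exact (Finset.mem_Icc.mp (Finset.filter_card_eq h (i, j) (mem_cells.mpr hin))).2

lemma stdize_of_inShape {i j : ℕ} (hin : InShape lam i j) :
    stdize lam T i j = ((cells lam).filter fun c =>
      T c.1 c.2 < T i j ∨ (T c.1 c.2 = T i j ∧ c.2 ≤ j)).card :=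
  if_pos hin

lemma stdize_of_not_inShape {i j : ℕ} (hin : ¬ InShape lam i j) : stdize lam T i j = 0 :=
  if_neg hin

lemma stdize_lt_stdize {i j i' j' : ℕ} (hin : InShape lam i j) (hin' : InShape lam i' j')
    (h : T i j < T i' j' ∨ (T i j = T i' j' ∧ j < j')) :
    stdize lam T i j < stdize lam T i' j' := by
  rw [stdize_of_inShape hin, stdize_of_inShape hin']
  refine Finset.card_lt_card ((Finset.ssubset_iff_of_subset fun c hc => ?_).mpr
    ⟨(i', j'), ?_, ?_⟩)
  · simp only [Finset.mem_filter] at hc ⊢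
    exact ⟨hc.1, by omega⟩
  · exact Finset.mem_filter.mpr ⟨mem_cells.mpr hin', Or.inr ⟨rfl, le_rfl⟩⟩
  · simp only [Finset.mem_filter, not_and]
    omega

lemma stdize_le_prefixSum_wt_iff (hT : IsSSYT lam T) {i j v : ℕ} (hin : InShape lam i j)
    (hv : v ≤ n) : stdize lam T i j ≤ prefixSum (wt lam n T) v ↔ T i j ≤ v := by
  rw [← card_filter_le_eq_prefixSum_wt hT hv, stdize_of_inShape hin]
  constructor
  · intro h
    by_contra! hvT
    refine absurd (Finset.card_lt_card ((Finset.ssubset_iff_of_subset fun c hc => ?_).mpr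
      ⟨(i, j), ?_, ?_⟩)) (not_lt.mpr h)
    · simp only [Finset.mem_filter] at hc ⊢
      exact ⟨hc.1, by omega⟩
    · exact Finset.mem_filter.mpr ⟨mem_cells.mpr hin, Or.inr ⟨rfl, le_rfl⟩⟩
    · simp only [Finset.mem_filter, not_and]
      omega
  · intro h
    refine Finset.card_le_card fun c hc => ?_
    simp only [Finset.mem_filter] at hc ⊢
    exact ⟨hc.1, by omega⟩

lemma stdize_le_sum_wt (hT : IsSSYT lam T) (hle : ∀ i j, InShape lam i j → T i j ≤ n)
    {i j : ℕ} (hin : InShape lam i j) : stdize lam T i j ≤ (wt lam n T).sum := by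
  rw [← prefixSum_of_length_le length_wt.le]
  exact (stdize_le_prefixSum_wt_iff hT hin le_rfl).mpr (hle i j hin)

lemma dmap_wt_stdize (hT : IsSSYT lam T) (hle : ∀ i j, InShape lam i j → T i j ≤ n) :
    Dmap (wt lam n T) (stdize lam T) = T := by
  funext i j
  by_cases hin : InShape lam i j
  · have hstd := stdize_le_sum_wt hT hle hin
    refine eq_of_forall_ge_iff fun v => ?_
    rw [Dmap, destValue_le_iff hstd]
    rcases le_total v n with hv | hv
    · exact stdize_le_prefixSum_wt_iff hT hin hv
    · rw [prefixSum_of_length_le (length_wt.trans_le hv)]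
      exact iff_of_true hstd ((hle i j hin).trans hv)
  · rw [Dmap, stdize_of_not_inShape hin, destValue_zero, hT.1 i j hin]

lemma mem_range_prefixSum_wt_of_isDescent (hT : IsSSYT lam T)
    (hle : ∀ i j, InShape lam i j → T i j ≤ n) {k : ℕ} (hk : IsDescent lam (stdize lam T) k) :
    k ∈ Set.range (prefixSum (wt lam n T)) := by
  obtain ⟨i₁, j₁, i₂, j₂, hin₁, hin₂, hv₁, hv₂, hi⟩ := hk
  have hlt : T i₁ j₁ < T i₂ j₂ := by
    rcases lt_trichotomy (T i₁ j₁) (T i₂ j₂) with h | h | h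
    · exact h
    · have hj : j₂ < j₁ := by
        by_contra! hj
        exact absurd (hT.lt_of_lt_of_le hin₂ hi hj) (by omega)
      have := stdize_lt_stdize hin₂ hin₁ (Or.inr ⟨h.symm, hj⟩)
      omega
    · have := stdize_lt_stdize hin₂ hin₁ (Or.inl h)
      omega
  have hD : ∀ i j, destValue (wt lam n T) (stdize lam T i j) = T i j :=
    congrFun₂ (dmap_wt_stdize hT hle)
  refine mem_range_prefixSum_of_destValue_lt (hv₂ ▸ stdize_le_sum_wt hT hle hin₂) ?_
  rwa [← hv₂, ← hv₁, hD, hD]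

lemma stdize_eq_of_forall_iff {S : Filling} {m : ℕ} (hS : IsSYT lam m S)
    (h : ∀ c ∈ cells lam, ∀ c' ∈ cells lam,
      (T c.1 c.2 < T c'.1 c'.2 ∨ (T c.1 c.2 = T c'.1 c'.2 ∧ c.2 ≤ c'.2)) ↔
        S c.1 c.2 ≤ S c'.1 c'.2) :
    stdize lam T = S := by
  funext i j
  by_cases hin : InShape lam i j
  · rw [stdize_of_inShape hin, Finset.filter_congr fun c hc => h c hc (i, j) (mem_cells.mpr hin)]
    dsimp only
    rw [hS.card_filter (· ≤ S i j)]
    have h₁ := hS.1.2.1 i j hin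
    have h₂ := hS.2.1 i j
    have : (Finset.Icc 1 m).filter (· ≤ S i j) = Finset.Icc 1 (S i j) := by
      ext k
      simp only [Finset.mem_filter, Finset.mem_Icc]
      omega
    rw [this, Nat.card_Icc, Nat.add_sub_cancel]
  · rw [stdize_of_not_inShape hin, hS.1.1 i j hin]

end Standardization

section Destandardization

variable {lam : List ℕ} {m : ℕ} {T : Filling} {g : List ℕ}

lemma wt_dmap (hT : IsSYT lam m T) (hg : g.sum = m) : wt lam g.length (Dmap g T) = g := by
  refine List.ext_getElem length_wt fun v hv _ => ?_
  rw [getElem_wt, countEq]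
  change ((cells lam).filter fun c => destValue g (T c.1 c.2) = v + 1).card = _
  rw [hT.card_filter (fun k => destValue g k = v + 1), ← hg]
  exact card_filter_destValue_eq (length_wt.symm.trans_gt hv)

lemma destValue_lt_of_isDescent (hdes : ∀ k, IsDescent lam T k → k ∈ Set.range (prefixSum g))
    {a b k : ℕ} (hak : a ≤ k) (hkb : k < b) (hb : b ≤ g.sum)
    (hk : IsDescent lam T k) : destValue g a < destValue g b := by
  obtain ⟨v, rfl⟩ := hdes k hk
  exact (destValue_lt_destValue_iff (by omega) hb).mpr ⟨v, hak, hkb⟩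

lemma col_lt_of_destValue_eq (hT : IsSYT lam m T) (hg : g.sum = m)
    (hdes : ∀ k, IsDescent lam T k → k ∈ Set.range (prefixSum g)) {i₁ j₁ i₂ j₂ : ℕ}
    (hin₁ : InShape lam i₁ j₁) (hin₂ : InShape lam i₂ j₂) (hlt : T i₁ j₁ < T i₂ j₂)
    (heq : destValue g (T i₁ j₁) = destValue g (T i₂ j₂)) : j₁ < j₂ :=
  (hT.northeast_of_forall_not_isDescent hlt (hT.2.1 _ _)
    (fun _ hak hkb hk => (destValue_lt_of_isDescent hdes hak hkb (hg ▸ hT.2.1 _ _) hk).ne heq)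
    hin₁ hin₂ rfl rfl).2

lemma isSSYT_dmap (hT : IsSYT lam m T) (hg : g.sum = m)
    (hdes : ∀ k, IsDescent lam T k → k ∈ Set.range (prefixSum g)) : IsSSYT lam (Dmap g T) := by
  have hpos : ∀ i j, InShape lam i j → 0 < Dmap g T i j := fun i j hin =>
    destValue_pos (hT.1.2.1 i j hin) (hg ▸ hT.2.1 i j)
  refine ⟨fun i j hin => ?_, hpos, fun i j₁ j₂ hj hin => ?_, fun i₁ i₂ j hi hin => ?_⟩
  · rw [Dmap, hT.1.1 i j hin, destValue_zero]
  · exact destValue_mono (hT.1.2.2.1 i j₁ j₂ hj hin) (hg ▸ hT.2.1 _ _)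
  · by_cases hin₁ : InShape lam i₁ j
    · by_contra! hle
      have hlt := hT.1.2.2.2 i₁ i₂ j hi hin
      have heq := le_antisymm (destValue_mono hlt.le (hg ▸ hT.2.1 _ _)) hle
      exact lt_irrefl j (col_lt_of_destValue_eq hT hg hdes hin₁ hin hlt heq)
    · rw [Dmap, hT.1.1 i₁ j hin₁, destValue_zero]
      exact hpos i₂ j hin

lemma stdize_dmap (hT : IsSYT lam m T) (hg : g.sum = m)
    (hdes : ∀ k, IsDescent lam T k → k ∈ Set.range (prefixSum g)) : stdize lam (Dmap g T) = T := by
  refine stdize_eq_of_forall_iff hT fun c hc c' hc' => ?_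
  rw [mem_cells] at hc hc'
  change destValue g (T c.1 c.2) < destValue g (T c'.1 c'.2) ∨
    (destValue g (T c.1 c.2) = destValue g (T c'.1 c'.2) ∧ c.2 ≤ c'.2) ↔ _
  rcases lt_trichotomy (T c.1 c.2) (T c'.1 c'.2) with h | h | h
  · refine iff_of_true ?_ h.le
    rcases (destValue_mono h.le (hg ▸ hT.2.1 _ _)).lt_or_eq with hd | hd
    · exact Or.inl hd
    · exact Or.inr ⟨hd, (col_lt_of_destValue_eq hT hg hdes hc hc' h hd).le⟩
  · rw [hT.injOn (mem_cells.mpr hc) (mem_cells.mpr hc') h]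
    simp
  · refine iff_of_false ?_ (by omega)
    rintro (hd | ⟨hd, hj⟩)
    · exact absurd (destValue_mono h.le (hg ▸ hT.2.1 _ _)) (by omega)
    · exact absurd (col_lt_of_destValue_eq hT hg hdes hc' hc h hd.symm) (by omega)

end Destandardization

theorem unique_ssyt_with_weight_and_standardization_general (m n : ℕ) (lam : List ℕ)
    (T₀ : Filling) (hT₀ : IsSYT lam m T₀)
    (alpha : List ℕ) (halpha : desComp lam m T₀ = alpha)
    (gamma : List ℕ) (hlen : gamma.length = n) (hsum : gamma.sum = m) :
    (Refines alpha (gamma.filter (· ≠ 0)) →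
      ∃! T : Filling, IsSSYT lam T ∧ wt lam n T = gamma ∧ stdize lam T = T₀) ∧
    (¬ Refines alpha (gamma.filter (· ≠ 0)) →
      ∀ T : Filling, ¬ (IsSSYT lam T ∧ wt lam n T = gamma ∧ stdize lam T = T₀)) := by
  subst halpha hlen
  rw [refines_desComp_filter_ne_zero_iff hT₀ hsum]
  have hle : ∀ T, wt lam gamma.length T = gamma → ∀ i j, InShape lam i j → T i j ≤ gamma.length :=
    fun T hw _ _ => le_of_sum_wt_eq_card (by rw [hw, hsum, hT₀.card_cells])
  refine ⟨fun hdes => ⟨Dmap gamma T₀, ⟨isSSYT_dmap hT₀ hsum hdes, wt_dmap hT₀ hsum,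
    stdize_dmap hT₀ hsum hdes⟩, ?_⟩, ?_⟩
  · rintro T ⟨hT, hw, rfl⟩
    calc T = Dmap (wt lam gamma.length T) (stdize lam T) := (dmap_wt_stdize hT (hle T hw)).symm
      _ = Dmap gamma (stdize lam T) := by rw [hw]
  · rintro hnot T ⟨hT, hw, rfl⟩
    exact hnot fun k hk => hw ▸ mem_range_prefixSum_wt_of_isDescent hT (hle T hw) hk

/-- Let `T₀` be a standard Young tableau of shape `lam ⊢ m` with descent composition `alpha`
and `gamma` a weak composition of `m` with `n` parts. If `gamma` with its zero parts deleted
refines `alpha`, then there is exactly one semistandard tableau `T` of shape `lam` with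
weight `gamma` and standardization `T₀`; otherwise there is none. -/
theorem unique_ssyt_with_weight_and_standardization (m n : ℕ) (lam : List ℕ)
    (hlam : IsPartitionOf m lam) (T₀ : Filling) (hT₀ : IsSYT lam m T₀)
    (alpha : List ℕ) (halpha : desComp lam m T₀ = alpha)
    (gamma : List ℕ) (hlen : gamma.length = n) (hsum : gamma.sum = m) :
    (Refines alpha (gamma.filter (· ≠ 0)) →
      ∃! T : Filling, IsSSYT lam T ∧ wt lam n T = gamma ∧ stdize lam T = T₀) ∧
    (¬ Refines alpha (gamma.filter (· ≠ 0)) →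
      ∀ T : Filling, ¬ (IsSSYT lam T ∧ wt lam n T = gamma ∧ stdize lam T = T₀)) :=
  unique_ssyt_with_weight_and_standardization_general m n lam T₀ hT₀ alpha halpha gamma hlen hsum

end QC
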